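/- For all integers k₁, k₂ ≥ 1, one has the submultiplicativity t_{k₁+k₂} ≤ t_{k₁}·t_{k₂}. -/

import Mathlib

open scoped BigOperators

/-- The Cantor iterates `C_k = {Σ_{j<k} a_j M^j : a_j ∈ A} ⊆ {0,…,M^k-1}`. -/
def Ck (M : ℕ) (A : Finset ℕ) (k : ℕ) : Finset ℕ :=
  (Fintype.piFinset fun _ : Fin k => A).image fun a => ∑ j : Fin k, a j * M ^ (j : ℕ)

/-- The discrete Fourier transform of the indicator function of `S ⊆ Z_N`,
`F_N(1_S)(m) = N^{-1/2} Σ_{l<N} 1_S(l) exp(-2πi m l / N)`; it is `N`-periodic in `m`,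
so a residue `m ∈ Z_N` may be fed in via any integer representative. -/
noncomputable def dftInd (N : ℕ) (S : Finset ℕ) (m : ℕ) : ℂ :=
  ((1 : ℝ) / Real.sqrt N : ℝ) * ∑ l ∈ Finset.range N,
    (if l ∈ S then (1 : ℂ) else 0) * Complex.exp (-(2 * (Real.pi : ℂ) * Complex.I * m * l) / N)

/-- `t_k = (1/N) Σ_{j,ℓ ∈ Z_N} 1_{C_k}(j) 1_{C_k}(ℓ) |F_N(1_{C_k})(ℓ-j)|²`, `N = M^k`,
where `ℓ - j` is taken in `Z_N` (represented by `ℓ + N - j ≡ ℓ - j (mod N)`). -/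
noncomputable def tk (M : ℕ) (A : Finset ℕ) (k : ℕ) : ℝ :=
  ((1 : ℝ) / ((M ^ k : ℕ) : ℝ)) * ∑ j ∈ Finset.range (M ^ k), ∑ l ∈ Finset.range (M ^ k),
    (if j ∈ Ck M A k then (1 : ℝ) else 0) * (if l ∈ Ck M A k then (1 : ℝ) else 0) *
      ‖dftInd (M ^ k) (Ck M A k) (l + M ^ k - j)‖ ^ 2

/-- The additive energy of `X ⊆ Z_N`. -/
def addE (N : ℕ) (X : Finset ℕ) : ℕ :=
  (((X ×ˢ X) ×ˢ (X ×ˢ X)).filter fun p => (p.1.1 + p.1.2) % N = (p.2.1 + p.2.2) % N).card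

/-!
Write `S_C(c) = Σ_{a ∈ C} e(ca/N)`, so that `|F_N(1_C)(m)|² = |S_C(m)|²/N`, and
`E(N, C) = Σ_{j,l ∈ C} |S_C(l - j)|² = N² t`. Expanding the square,
`E(N, C) = Σ e((l - j)(b - a)/N)` over `j, l, a, b ∈ C`.
For `N = N₁N₂` and `C = C₁ + N₁C₂ = C₂ + N₂C₁` (both sums direct) write
`l - j = x₀ + N₁x₁` and `b - a = y₀ + N₂y₁` along the two decompositions. Since `x₁y₁ ∈ ℤ` the
phase factors as `e(x₀y₀/N) e(y₀x₁/N₂) e(x₀y₁/N₁)`, and summing out `x₁` and `y₁` leaves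
`E(N, C) = Σ_{x₀, y₀} e(x₀y₀/N) |S_{C₁}(x₀)|² |S_{C₂}(y₀)|²`. The triangle inequality gives
`E(N, C) ≤ E(N₁, C₁) E(N₂, C₂)`, which applies to `C_{k₁+k₂} = C_{k₁} + M^{k₁}C_{k₂}`.
-/

open Finset
open scoped FourierTransform

/-- `C₁ + N·C₂`; on `Finset ℕ` the pointwise `N • C₂` would be the `N`-fold sumset. -/
def addScaled (N : ℕ) (C₁ C₂ : Finset ℕ) : Finset ℕ :=
  (C₁ ×ˢ C₂).image fun p => p.1 + N * p.2

theorem injOn_add_mul {N : ℕ} {C₁ : Finset ℕ} (hC₁ : C₁ ⊆ range N) (C₂ : Finset ℕ) :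
    Set.InjOn (fun p : ℕ × ℕ => p.1 + N * p.2) (C₁ ×ˢ C₂ : Finset (ℕ × ℕ)) := by
  rintro ⟨x, y⟩ hxy ⟨x', y'⟩ hxy' h
  simp only [coe_product, Set.mem_prod, mem_coe] at hxy hxy' h
  have hx := mem_range.mp (hC₁ hxy.1)
  have hx' := mem_range.mp (hC₁ hxy'.1)
  obtain rfl : x = x' := by
    simpa [Nat.add_mul_mod_self_left, Nat.mod_eq_of_lt hx, Nat.mod_eq_of_lt hx'] using
      congrArg (· % N) h
  simp only [Prod.mk.injEq, true_and]
  exact Nat.eq_of_mul_eq_mul_left (by omega) (Nat.add_left_cancel h)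

theorem sum_addScaled {β : Type*} [AddCommMonoid β] {N : ℕ} {C₁ : Finset ℕ}
    (hC₁ : C₁ ⊆ range N) (C₂ : Finset ℕ) (f : ℕ → β) :
    ∑ c ∈ addScaled N C₁ C₂, f c = ∑ x ∈ C₁, ∑ y ∈ C₂, f (x + N * y) := by
  rw [addScaled, sum_image (injOn_add_mul hC₁ C₂), sum_product]

theorem addScaled_subset_range {N₁ N₂ : ℕ} {C₁ C₂ : Finset ℕ} (hC₁ : C₁ ⊆ range N₁)
    (hC₂ : C₂ ⊆ range N₂) : addScaled N₁ C₁ C₂ ⊆ range (N₁ * N₂) := by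
  rw [addScaled, image_subset_iff]
  rintro ⟨x, y⟩ hxy
  have hx := mem_range.mp (hC₁ (mem_product.mp hxy).1)
  have hy := mem_range.mp (hC₂ (mem_product.mp hxy).2)
  rw [mem_range]
  nlinarith

theorem Ck_add (M : ℕ) (A : Finset ℕ) (k k' : ℕ) :
    Ck M A (k + k') = addScaled (M ^ k) (Ck M A k) (Ck M A k') := by
  ext x
  simp only [Ck, addScaled, mem_image, Fintype.mem_piFinset, mem_product]
  constructor
  · rintro ⟨a, ha, rfl⟩
    refine ⟨(∑ j : Fin k, a (Fin.castAdd k' j) * M ^ (j : ℕ),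
            ∑ j : Fin k', a (Fin.natAdd k j) * M ^ (j : ℕ)),
      ⟨⟨_, fun j => ha _, rfl⟩, ⟨_, fun j => ha _, rfl⟩⟩, ?_⟩
    simp only [Fin.sum_univ_add, Fin.val_castAdd, Fin.val_natAdd, mul_sum, pow_add]
    congr 1
    exact sum_congr rfl fun j _ => by ring
  · rintro ⟨⟨y, z⟩, ⟨⟨a₁, ha₁, rfl⟩, ⟨a₂, ha₂, rfl⟩⟩, rfl⟩
    refine ⟨Fin.append a₁ a₂, Fin.addCases (by simpa using ha₁) (by simpa using ha₂), ?_⟩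
    simp only [Fin.sum_univ_add, Fin.append_left, Fin.append_right, Fin.val_castAdd,
      Fin.val_natAdd, mul_sum, pow_add]
    congr 1
    exact sum_congr rfl fun j _ => by ring

theorem Ck_one_subset {M : ℕ} {A : Finset ℕ} (hA : A ⊆ range M) : Ck M A 1 ⊆ range M := by
  intro x hx
  simp only [Ck, mem_image, Fintype.mem_piFinset] at hx
  obtain ⟨a, ha, rfl⟩ := hx
  simpa using hA (ha 0)

theorem Ck_subset_range {M : ℕ} {A : Finset ℕ} (hA : A ⊆ range M) (k : ℕ) :
    Ck M A k ⊆ range (M ^ k) := by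
  induction k with
  | zero => simp [Ck]
  | succ k ih =>
    rw [Ck_add, pow_succ]
    exact addScaled_subset_range ih (Ck_one_subset hA)

section diffSum

variable {β : Type*}

def diffSum [AddCommMonoid β] (X : Finset ℕ) (f : ℤ → β) : β :=
  ∑ j ∈ X, ∑ l ∈ X, f (l - j)

theorem diffSum_eq_sum_product [AddCommMonoid β] (X : Finset ℕ) (f : ℤ → β) :
    diffSum X f = ∑ p ∈ X ×ˢ X, f (p.2 - p.1) := by
  rw [diffSum, sum_product]

theorem diffSum_addScaled [AddCommMonoid β] {N : ℕ} {C₁ : Finset ℕ} (hC₁ : C₁ ⊆ range N)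
    (C₂ : Finset ℕ) (f : ℤ → β) :
    diffSum (addScaled N C₁ C₂) f = diffSum C₁ fun x => diffSum C₂ fun y => f (x + N * y) := by
  simp only [diffSum, sum_addScaled hC₁]
  refine sum_congr rfl fun j₀ _ => ?_
  rw [sum_comm]
  refine sum_congr rfl fun l₀ _ => sum_congr rfl fun j₁ _ => sum_congr rfl fun l₁ _ => ?_
  push_cast
  ring_nf

theorem diffSum_comm [AddCommMonoid β] (X Y : Finset ℕ) (f : ℤ → ℤ → β) :
    (diffSum X fun x => diffSum Y fun y => f x y) =
      diffSum Y fun y => diffSum X fun x => f x y := by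
  simp only [diffSum_eq_sum_product]
  exact sum_comm

theorem diffSum_mul_diffSum [NonUnitalNonAssocSemiring β] (X Y : Finset ℕ) (f g : ℤ → β) :
    diffSum X f * diffSum Y g = diffSum X fun x => diffSum Y fun y => f x * g y := by
  simp only [diffSum_eq_sum_product, sum_mul_sum]

theorem mul_diffSum [NonUnitalNonAssocSemiring β] (a : β) (X : Finset ℕ) (f : ℤ → β) :
    a * diffSum X f = diffSum X fun x => a * f x := by
  simp only [diffSum, mul_sum]

theorem diffSum_mono [AddCommMonoid β] [PartialOrder β] [IsOrderedAddMonoid β]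
    {X : Finset ℕ} {f g : ℤ → β} (h : ∀ x, f x ≤ g x) : diffSum X f ≤ diffSum X g :=
  sum_le_sum fun _ _ => sum_le_sum fun _ _ => h _

theorem norm_diffSum_le [SeminormedAddCommGroup β] (X : Finset ℕ) (f : ℤ → β) :
    ‖diffSum X f‖ ≤ diffSum X fun x => ‖f x‖ :=
  (norm_sum_le _ _).trans (sum_le_sum fun _ _ => norm_sum_le _ _)

end diffSum

theorem fourierChar_intCast (n : ℤ) : 𝐞 (n : ℝ) = 1 := by
  rw [Real.fourierChar_apply', Circle.exp_two_pi_mul_int]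

theorem fourierChar_addScaled_mul {N₁ N₂ : ℕ} (hN₁ : N₁ ≠ 0) (hN₂ : N₂ ≠ 0)
    (x₀ x₁ y₀ y₁ : ℤ) :
    𝐞 (((x₀ + N₁ * x₁ : ℤ) : ℝ) * ((y₀ + N₂ * y₁ : ℤ) : ℝ) / ((N₁ * N₂ : ℕ) : ℝ))
      = 𝐞 (x₀ * y₀ / ((N₁ * N₂ : ℕ) : ℝ)) * 𝐞 (y₀ * x₁ / N₂) * 𝐞 (x₀ * y₁ / N₁) := by
  have hsplit : ((x₀ + N₁ * x₁ : ℤ) : ℝ) * ((y₀ + N₂ * y₁ : ℤ) : ℝ) / ((N₁ * N₂ : ℕ) : ℝ)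
      = x₀ * y₀ / ((N₁ * N₂ : ℕ) : ℝ) + y₀ * x₁ / N₂ + x₀ * y₁ / N₁ + ((x₁ * y₁ : ℤ) : ℝ) := by
    push_cast
    field_simp
    ring
  rw [hsplit, AddChar.map_add_eq_mul, fourierChar_intCast, mul_one, AddChar.map_add_eq_mul,
    AddChar.map_add_eq_mul]

noncomputable def expSum (N : ℕ) (C : Finset ℕ) (c : ℤ) : ℂ :=
  ∑ a ∈ C, 𝐞 (c * a / N)

noncomputable def expSumEnergy (N : ℕ) (C : Finset ℕ) : ℝ :=
  diffSum C fun x => ‖expSum N C x‖ ^ 2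

theorem expSum_add_self {N : ℕ} (hN : N ≠ 0) (C : Finset ℕ) (c : ℤ) :
    expSum N C (c + N) = expSum N C c := by
  refine sum_congr rfl fun a _ => ?_
  have h : ((c + N : ℤ) : ℝ) * a / N = c * a / N + ((a : ℤ) : ℝ) := by
    push_cast
    field_simp
  rw [h, AddChar.map_add_eq_mul, fourierChar_intCast, mul_one]

theorem sq_norm_expSum (N : ℕ) (C : Finset ℕ) (c : ℤ) :
    ((‖expSum N C c‖ ^ 2 : ℝ) : ℂ) = diffSum C fun y => (𝐞 (c * y / N) : ℂ) := by
  rw [Complex.ofReal_pow, ← Complex.mul_conj', expSum, map_sum, sum_mul_sum, diffSum, sum_comm]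
  refine sum_congr rfl fun b _ => sum_congr rfl fun a _ => ?_
  rw [← Circle.coe_inv_eq_conj, ← Circle.coe_mul, ← AddChar.map_neg_eq_inv,
    ← AddChar.map_add_eq_mul]
  congr 2
  push_cast
  ring

theorem ofReal_expSumEnergy (N : ℕ) (C : Finset ℕ) :
    (expSumEnergy N C : ℂ) = diffSum C fun x => diffSum C fun y => (𝐞 (x * y / N) : ℂ) := by
  simp only [expSumEnergy, diffSum, Complex.ofReal_sum, sq_norm_expSum]

theorem expSumEnergy_le_mul {N₁ N₂ : ℕ} (hN₁ : N₁ ≠ 0) (hN₂ : N₂ ≠ 0) {C C₁ C₂ : Finset ℕ}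
    (hC₁ : C₁ ⊆ range N₁) (hC₂ : C₂ ⊆ range N₂)
    (hC₁₂ : C = addScaled N₁ C₁ C₂) (hC₂₁ : C = addScaled N₂ C₂ C₁) :
    expSumEnergy (N₁ * N₂) C ≤ expSumEnergy N₁ C₁ * expSumEnergy N₂ C₂ := by
  set e : ℤ → ℤ → ℂ := fun x y => 𝐞 (x * y / ((N₁ * N₂ : ℕ) : ℝ))
  have hexpand : (expSumEnergy (N₁ * N₂) C : ℂ) = diffSum C₁ fun x₀ => diffSum C₂ fun y₀ =>
      e x₀ y₀ * ((‖expSum N₁ C₁ x₀‖ ^ 2 * ‖expSum N₂ C₂ y₀‖ ^ 2 : ℝ) : ℂ) := by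
    have hinner : ∀ x : ℤ, (diffSum C fun y => (𝐞 (x * y / ((N₁ * N₂ : ℕ) : ℝ)) : ℂ)) =
        diffSum C₂ fun y₀ => diffSum C₁ fun y₁ =>
          (𝐞 (x * ((y₀ + N₂ * y₁ : ℤ) : ℝ) / ((N₁ * N₂ : ℕ) : ℝ)) : ℂ) := fun x => by
      rw [hC₂₁, diffSum_addScaled hC₂]
    rw [ofReal_expSumEnergy]
    simp_rw [hinner]
    rw [hC₁₂, diffSum_addScaled hC₁]
    simp_rw [fourierChar_addScaled_mul hN₁ hN₂, Circle.coe_mul, Complex.ofReal_mul,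
      sq_norm_expSum]
    congr 1; funext x₀
    rw [diffSum_comm]
    congr 1; funext y₀
    rw [mul_comm (diffSum C₁ _), diffSum_mul_diffSum, mul_diffSum]
    simp only [mul_diffSum, mul_assoc]
    rfl
  calc expSumEnergy (N₁ * N₂) C ≤ ‖(expSumEnergy (N₁ * N₂) C : ℂ)‖ := by
        rw [Complex.norm_real]; exact le_abs_self _
    _ ≤ diffSum C₁ fun x₀ => diffSum C₂ fun y₀ =>
          ‖expSum N₁ C₁ x₀‖ ^ 2 * ‖expSum N₂ C₂ y₀‖ ^ 2 := by
        rw [hexpand]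
        refine (norm_diffSum_le _ _).trans (diffSum_mono fun x₀ => ?_)
        refine (norm_diffSum_le _ _).trans_eq ?_
        simp only [e, norm_mul, Circle.norm_coe, one_mul, Complex.norm_real, Real.norm_eq_abs,
          abs_pow, abs_norm]
    _ = expSumEnergy N₁ C₁ * expSumEnergy N₂ C₂ := (diffSum_mul_diffSum _ _ _ _).symm

theorem sum_range_boole_mul {R : Type*} [NonAssocSemiring R] {N : ℕ} {S : Finset ℕ}
    (hS : S ⊆ range N) (g : ℕ → R) :
    ∑ j ∈ range N, (if j ∈ S then 1 else 0) * g j = ∑ j ∈ S, g j := by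
  simp only [ite_mul, one_mul, zero_mul, sum_ite_mem, inter_eq_right.mpr hS]

theorem sq_norm_dftInd {N : ℕ} {S : Finset ℕ} (hS : S ⊆ range N) (m : ℕ) :
    ‖dftInd N S m‖ ^ 2 = ‖expSum N S m‖ ^ 2 / N := by
  have hconj : (∑ l ∈ range N, (if l ∈ S then (1 : ℂ) else 0) *
      Complex.exp (-(2 * (Real.pi : ℂ) * Complex.I * m * l) / N)) =
      starRingEnd ℂ (expSum N S m) := by
    rw [sum_range_boole_mul hS, expSum, map_sum]
    refine sum_congr rfl fun l _ => ?_
    rw [Real.fourierChar_apply, ← Complex.exp_conj]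
    congr 1
    simp only [map_mul, Complex.conj_ofReal, Complex.conj_I]
    push_cast
    ring
  rw [dftInd, hconj, norm_mul, Complex.norm_real, Complex.norm_conj, mul_pow, Real.norm_eq_abs,
    sq_abs, div_pow, Real.sq_sqrt N.cast_nonneg]
  ring

theorem sum_sq_norm_dftInd_sub_eq {N : ℕ} (hN : N ≠ 0) {S : Finset ℕ} (hS : S ⊆ range N) :
    (1 / (N : ℝ)) * ∑ j ∈ range N, ∑ l ∈ range N,
      (if j ∈ S then (1 : ℝ) else 0) * (if l ∈ S then (1 : ℝ) else 0) *
        ‖dftInd N S (l + N - j)‖ ^ 2 = expSumEnergy N S / (N : ℝ) ^ 2 := by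
  simp only [mul_assoc, ← mul_sum, sum_range_boole_mul hS]
  have hshift : ∀ j ∈ S, ∀ l : ℕ,
      ‖dftInd N S (l + N - j)‖ ^ 2 = ‖expSum N S (l - j)‖ ^ 2 / N := by
    intro j hj l
    have hj : j ≤ l + N := by have := mem_range.mp (hS hj); omega
    rw [sq_norm_dftInd hS, Nat.cast_sub hj, Nat.cast_add, add_sub_right_comm, expSum_add_self hN]
  rw [expSumEnergy, diffSum, div_eq_mul_one_div _ ((N : ℝ) ^ 2), sum_mul, mul_sum]
  refine sum_congr rfl fun j hj => ?_
  rw [sum_mul, mul_sum]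
  refine sum_congr rfl fun l _ => ?_
  rw [hshift j hj l]
  ring

theorem stmt3_general (M : ℕ) (hM : 2 ≤ M) (A : Finset ℕ) (hA : A ⊆ Finset.range M)
    (k₁ k₂ : ℕ) :
    tk M A (k₁ + k₂) ≤ tk M A k₁ * tk M A k₂ := by
  have hMk : ∀ k, M ^ k ≠ 0 := fun k => pow_ne_zero k (by omega)
  have htk : ∀ k, tk M A k = expSumEnergy (M ^ k) (Ck M A k) / ((M ^ k : ℕ) : ℝ) ^ 2 :=
    fun k => sum_sq_norm_dftInd_sub_eq (hMk k) (Ck_subset_range hA k)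
  have henergy : expSumEnergy (M ^ k₁ * M ^ k₂) (Ck M A (k₁ + k₂)) ≤
      expSumEnergy (M ^ k₁) (Ck M A k₁) * expSumEnergy (M ^ k₂) (Ck M A k₂) :=
    expSumEnergy_le_mul (hMk k₁) (hMk k₂) (Ck_subset_range hA k₁) (Ck_subset_range hA k₂)
      (Ck_add M A k₁ k₂) (by rw [add_comm, Ck_add])
  rw [htk, htk, htk, pow_add, div_mul_div_comm, Nat.cast_mul, mul_pow]
  exact div_le_div_of_nonneg_right henergy (by positivity)

/-- Submultiplicativity: `t_{k₁+k₂} ≤ t_{k₁} · t_{k₂}` for `k₁, k₂ ≥ 1`. -/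
theorem stmt3 (M : ℕ) (hM : 2 ≤ M) (A : Finset ℕ) (hA : A ⊆ Finset.range M)
    (k₁ k₂ : ℕ) (hk₁ : 1 ≤ k₁) (hk₂ : 1 ≤ k₂) :
    tk M A (k₁ + k₂) ≤ tk M A k₁ * tk M A k₂ :=
  stmt3_general M hM A hA k₁ k₂
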